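/- Spectral gap of the Grover interpolating Hamiltonian: The operator H(s) := (1−s)H₀ + sH₁ on ℂ^{2ⁿ} has a nondegenerate smallest eigenvalue for every s ∈ [0,1], and the difference between the second-smallest and the smallest eigenvalue of H(s) equals g(s) = √( 2^{−n} + 4(1 − 2^{−n})(s − 1/2)² ). In particular g(0) = g(1) = 1 and min over s ∈ [0,1] of g(s) = 2^{−n/2}. -/

import Mathlib

/-!
Write `c = ⟪ψ, e⟫ = 2^{-n/2}`. The operator `H(s) = 1 - (1 - s) |ψ⟩⟨ψ| - s |e⟩⟨e|` is the identity on
`{ψ, e}ᗮ` and preserves `span {ψ, e}`, where in the basis `(ψ, e)` it is a `2 × 2` matrix with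
characteristic polynomial `(μ - s)(μ - (1 - s)) - s(1 - s)c² = (μ - (1 - g)/2)(μ - (1 + g)/2)`,
`g = g(s)`. Conversely, the overlaps `(⟪ψ, x⟫, ⟪e, x⟫)` of an eigenvector `x` for `μ ≠ 1` are a nonzero
eigenvector of the transposed matrix, so `μ = (1 ± g)/2`; since that matrix is never scalar, the
eigenspace is at most one-dimensional. Finally `g ≤ 1`, so the eigenvalue `1` does not lie below
`(1 + g)/2`.
-/

open scoped InnerProductSpace Matrix
open Module

theorem linearIndependent_pair_of_norm_inner_lt {𝕜 E : Type*} [RCLike 𝕜] [NormedAddCommGroup E]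
    [InnerProductSpace 𝕜 E] {x y : E} (h : ‖⟪x, y⟫_𝕜‖ < ‖x‖ * ‖y‖) :
    LinearIndependent 𝕜 ![x, y] := by
  have hx : x ≠ 0 := by rintro rfl; simp at h
  refine (LinearIndependent.pair_iff' hx).2 fun a hxy => h.ne ?_
  have hcs := (norm_inner_eq_norm_tfae 𝕜 x y).out 2 0
  exact hcs.1 (Or.inr ⟨a, hxy.symm⟩)

theorem Matrix.finrank_ker_toLin'_lt {K m n : Type*} [Field K] [Fintype n] [DecidableEq n]
    {N : Matrix m n K} (hN : N ≠ 0) : finrank K (LinearMap.ker N.toLin') < Fintype.card n := by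
  rw [← Module.finrank_fintype_fun_eq_card (R := K)]
  refine Submodule.finrank_lt fun h => hN ?_
  rw [LinearMap.ker_eq_top] at h
  exact Matrix.toLin'.injective (h.trans (map_zero _).symm)

theorem EuclideanSpace.norm_sum_single_one {𝕜 ι : Type*} [RCLike 𝕜] [Fintype ι]
    [DecidableEq ι] :
    ‖∑ w : ι, EuclideanSpace.single w (1 : 𝕜)‖ = √(Fintype.card ι) := by
  simp [EuclideanSpace.norm_eq]

theorem EuclideanSpace.inner_sum_single_one_single {𝕜 ι : Type*} [RCLike 𝕜] [Fintype ι]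
    [DecidableEq ι] (u : ι) :
    ⟪∑ w : ι, EuclideanSpace.single w (1 : 𝕜), EuclideanSpace.single u (1 : 𝕜)⟫_𝕜 = 1 := by
  simp [EuclideanSpace.inner_single_right]

noncomputable def groverGap (p s : ℝ) : ℝ := √(p + 4 * (1 - p) * (s - 1 / 2) ^ 2)

theorem groverGap_sq {p s : ℝ} (hp0 : 0 ≤ p) (hp1 : p ≤ 1) :
    groverGap p s ^ 2 = p + 4 * (1 - p) * (s - 1 / 2) ^ 2 :=
  Real.sq_sqrt (by have := sub_nonneg.2 hp1; positivity)

theorem groverGap_pos {p s : ℝ} (hp0 : 0 < p) (hp1 : p ≤ 1) : 0 < groverGap p s :=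
  Real.sqrt_pos.2 (by have := sub_nonneg.2 hp1; positivity)

theorem groverGap_le_one {p s : ℝ} (hp1 : p ≤ 1) (hs : s ∈ Set.Icc 0 1) : groverGap p s ≤ 1 :=
  Real.sqrt_le_one.2 <| by
    nlinarith [mul_nonneg (sub_nonneg.2 hp1) (mul_nonneg hs.1 (sub_nonneg.2 hs.2))]

theorem groverGap_zero_right (p : ℝ) : groverGap p 0 = 1 := by
  rw [groverGap, show p + 4 * (1 - p) * (0 - 1 / 2) ^ 2 = 1 by ring, Real.sqrt_one]

theorem groverGap_one_right (p : ℝ) : groverGap p 1 = 1 := by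
  rw [groverGap, show p + 4 * (1 - p) * (1 - 1 / 2) ^ 2 = 1 by ring, Real.sqrt_one]

theorem isLeast_groverGap_image {p : ℝ} (hp1 : p ≤ 1) :
    IsLeast (groverGap p '' Set.Icc 0 1) √p := by
  refine ⟨⟨1 / 2, by norm_num, by norm_num [groverGap]⟩, ?_⟩
  rintro _ ⟨s, -, rfl⟩
  exact Real.sqrt_le_sqrt (by nlinarith [sub_nonneg.2 hp1, sq_nonneg (s - 1 / 2)])

section GroverHamiltonian

variable {V : Type*} [NormedAddCommGroup V] [InnerProductSpace ℂ V]

noncomputable def groverHamiltonian (ψ e : V) (s : ℝ) : V →L[ℂ] V :=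
  (1 - s) • (1 - (innerSL ℂ ψ).smulRight ψ) + s • (1 - (innerSL ℂ e).smulRight e)

theorem groverHamiltonian_apply (ψ e : V) (s : ℝ) (x : V) :
    groverHamiltonian ψ e s x = x - ((1 - s) * ⟪ψ, x⟫_ℂ) • ψ - (s * ⟪e, x⟫_ℂ) • e := by
  simp only [groverHamiltonian, add_apply, smul_apply, sub_apply, one_apply_eq_self,
    ContinuousLinearMap.smulRight_apply, innerSL_apply_apply]
  rw [← Complex.coe_smul, ← Complex.coe_smul]
  push_cast
  module

-- The matrix of `groverHamiltonian ψ e s` on `span {ψ, e}` in the basis `(ψ, e)`, when `⟪ψ, e⟫ = c`.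
noncomputable def groverMatrix (c s : ℝ) : Matrix (Fin 2) (Fin 2) ℂ :=
  !![(s : ℂ), -(1 - s) * c; -s * c, 1 - s]

noncomputable def overlaps (ψ e : V) : V →ₗ[ℂ] Fin 2 → ℂ :=
  LinearMap.pi fun i => innerₛₗ ℂ (![ψ, e] i)

variable {ψ e : V} {c : ℝ}

theorem groverHamiltonian_apply_sum (hψ : ‖ψ‖ = 1) (he : ‖e‖ = 1) (hψe : ⟪ψ, e⟫_ℂ = c) (s : ℝ)
    (v : Fin 2 → ℂ) :
    groverHamiltonian ψ e s (∑ i, v i • ![ψ, e] i) =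
      ∑ i, (groverMatrix c s *ᵥ v) i • ![ψ, e] i := by
  have heψ : ⟪e, ψ⟫_ℂ = c := by rw [← inner_conj_symm, hψe, Complex.conj_ofReal]
  simp [Fin.sum_univ_two, groverHamiltonian_apply, groverMatrix, Matrix.mulVec, dotProduct,
    inner_self_eq_norm_sq_to_K, hψ, he, hψe, heψ]
  module

theorem overlaps_groverHamiltonian (hψ : ‖ψ‖ = 1) (he : ‖e‖ = 1) (hψe : ⟪ψ, e⟫_ℂ = c) (s : ℝ)
    (x : V) :
    overlaps ψ e (groverHamiltonian ψ e s x) = (groverMatrix c s)ᵀ *ᵥ overlaps ψ e x := by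
  have heψ : ⟪e, ψ⟫_ℂ = c := by rw [← inner_conj_symm, hψe, Complex.conj_ofReal]
  ext i
  fin_cases i <;>
  simp [overlaps, groverHamiltonian_apply, groverMatrix, Matrix.mulVec, dotProduct,
    inner_sub_right, inner_smul_right, inner_self_eq_norm_sq_to_K, hψ, he, hψe, heψ] <;> ring

theorem overlaps_ne_zero_of_hasEigenvector {s : ℝ} {μ : ℂ} {x : V}
    (hx : End.HasEigenvector (groverHamiltonian ψ e s).toLinearMap μ x) (hμ : μ ≠ 1) :
    overlaps ψ e x ≠ 0 := by
  intro h0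
  have hψx : ⟪ψ, x⟫_ℂ = 0 := congrFun h0 0
  have hex : ⟪e, x⟫_ℂ = 0 := congrFun h0 1
  have hHx : groverHamiltonian ψ e s x = μ • x := End.mem_eigenspace_iff.1 hx.1
  rw [groverHamiltonian_apply, hψx, hex] at hHx
  have : (μ - 1) • x = 0 := by rw [sub_smul, ← hHx]; simp
  exact hx.2 ((smul_eq_zero.1 this).resolve_left (sub_ne_zero.2 hμ))

theorem hasEigenvalue_groverHamiltonian (hψ : ‖ψ‖ = 1) (he : ‖e‖ = 1) (hψe : ⟪ψ, e⟫_ℂ = c)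
    (hc : |c| < 1) {s : ℝ} {μ : ℂ} (hμ : (groverMatrix c s - μ • 1).det = 0) :
    End.HasEigenvalue (groverHamiltonian ψ e s).toLinearMap μ := by
  obtain ⟨v, hv0, hv⟩ := Matrix.exists_mulVec_eq_zero_iff.2 hμ
  have hind : LinearIndependent ℂ ![ψ, e] :=
    linearIndependent_pair_of_norm_inner_lt (by simpa [hψ, he, hψe] using hc)
  refine End.hasEigenvalue_of_hasEigenvector (x := ∑ i, v i • ![ψ, e] i) ⟨?_, ?_⟩
  · rw [End.mem_eigenspace_iff, ContinuousLinearMap.coe_coe,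
      groverHamiltonian_apply_sum hψ he hψe, Finset.smul_sum]
    rw [Matrix.sub_mulVec, Matrix.smul_mulVec, Matrix.one_mulVec, sub_eq_zero] at hv
    simp [hv, smul_smul]
  · intro h
    exact hv0 (funext (Fintype.linearIndependent_iff.1 hind v h))

theorem transpose_mulVec_overlaps_eq_zero_of_mem_eigenspace (hψ : ‖ψ‖ = 1) (he : ‖e‖ = 1)
    (hψe : ⟪ψ, e⟫_ℂ = c) {s : ℝ} {μ : ℂ} {x : V}
    (hx : x ∈ End.eigenspace (groverHamiltonian ψ e s).toLinearMap μ) :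
    (groverMatrix c s - μ • 1)ᵀ *ᵥ overlaps ψ e x = 0 := by
  have hHx : groverHamiltonian ψ e s x = μ • x := End.mem_eigenspace_iff.1 hx
  rw [Matrix.transpose_sub, Matrix.transpose_smul, Matrix.transpose_one, Matrix.sub_mulVec,
    Matrix.smul_mulVec, Matrix.one_mulVec, ← overlaps_groverHamiltonian hψ he hψe, hHx,
    map_smul, sub_self]

theorem det_eq_zero_of_hasEigenvalue_groverHamiltonian (hψ : ‖ψ‖ = 1) (he : ‖e‖ = 1)
    (hψe : ⟪ψ, e⟫_ℂ = c) {s : ℝ} {μ : ℂ}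
    (hμ : End.HasEigenvalue (groverHamiltonian ψ e s).toLinearMap μ) (hμ1 : μ ≠ 1) :
    (groverMatrix c s - μ • 1).det = 0 := by
  obtain ⟨x, hx⟩ := hμ.exists_hasEigenvector
  rw [← Matrix.det_transpose]
  exact Matrix.exists_mulVec_eq_zero_iff.1 ⟨_, overlaps_ne_zero_of_hasEigenvector hx hμ1,
    transpose_mulVec_overlaps_eq_zero_of_mem_eigenspace hψ he hψe hx.1⟩

theorem det_groverMatrix_sub_smul_one (c s : ℝ) (μ : ℂ) :
    (groverMatrix c s - μ • 1).det = (s - μ) * (1 - s - μ) - s * (1 - s) * c ^ 2 := by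
  rw [Matrix.det_fin_two]
  simp [groverMatrix]
  ring

theorem groverMatrix_sub_smul_one_ne_zero (hc : c ≠ 0) (s : ℝ) (μ : ℂ) :
    groverMatrix c s - μ • 1 ≠ 0 := by
  intro h
  have h01 := congrFun (congrFun h 0) 1
  have h10 := congrFun (congrFun h 1) 0
  simp only [groverMatrix] at h01 h10
  simp [hc] at h01 h10
  simp [h10] at h01

theorem finrank_eigenspace_groverHamiltonian (hψ : ‖ψ‖ = 1) (he : ‖e‖ = 1)
    (hψe : ⟪ψ, e⟫_ℂ = c) (hc : c ≠ 0) {s : ℝ} {μ : ℂ}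
    (hμ : End.HasEigenvalue (groverHamiltonian ψ e s).toLinearMap μ) (hμ1 : μ ≠ 1) :
    finrank ℂ (End.eigenspace (groverHamiltonian ψ e s).toLinearMap μ) = 1 := by
  let f := ((overlaps ψ e).domRestrict _).codRestrict
    (LinearMap.ker (groverMatrix c s - μ • 1)ᵀ.toLin') fun x =>
      transpose_mulVec_overlaps_eq_zero_of_mem_eigenspace hψ he hψe x.2
  have hf : Function.Injective f := by
    refine (injective_iff_map_eq_zero f).2 fun x hx => ?_
    by_contra hx0
    refine overlaps_ne_zero_of_hasEigenvector ⟨x.2, by simpa using hx0⟩ hμ1 ?_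
    exact congrArg Subtype.val hx
  have := Module.Finite.of_injective f hf
  obtain ⟨x, hx⟩ := hμ.exists_hasEigenvector
  refine le_antisymm ?_ (Module.finrank_pos_iff_exists_ne_zero.2 ⟨⟨x, hx.1⟩, by simpa using hx.2⟩)
  calc finrank ℂ _ ≤ finrank ℂ (LinearMap.ker (groverMatrix c s - μ • 1)ᵀ.toLin') :=
        LinearMap.finrank_le_finrank_of_injective hf
    _ ≤ 1 := Nat.le_of_lt_succ (Matrix.finrank_ker_toLin'_lt
        (by rw [ne_eq, Matrix.transpose_eq_zero]; exact groverMatrix_sub_smul_one_ne_zero hc s μ))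

theorem groverHamiltonian_spectrum (hψ : ‖ψ‖ = 1) (he : ‖e‖ = 1) (hψe : ⟪ψ, e⟫_ℂ = c)
    (hc0 : 0 < c) (hc1 : c < 1) {s : ℝ} (hs : s ∈ Set.Icc 0 1) :
    let H := (groverHamiltonian ψ e s).toLinearMap
    let g := groverGap (c ^ 2) s
    ∃ E₀ : ℝ, End.HasEigenvalue H E₀ ∧ finrank ℂ (End.eigenspace H E₀) = 1 ∧
      End.HasEigenvalue H ((E₀ + g : ℝ) : ℂ) ∧
      ∀ μ : ℝ, End.HasEigenvalue H μ → μ = E₀ ∨ E₀ + g ≤ μ := by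
  intro H g
  have hg0 : 0 < g := groverGap_pos (by positivity) (by nlinarith)
  have hg1 : g ≤ 1 := groverGap_le_one (by nlinarith) hs
  have hroots (μ : ℝ) :
      (groverMatrix c s - (μ : ℂ) • 1).det = 0 ↔ μ = (1 - g) / 2 ∨ μ = (1 + g) / 2 := by
    have hg2 : g ^ 2 = c ^ 2 + 4 * (1 - c ^ 2) * (s - 1 / 2) ^ 2 :=
      groverGap_sq (by positivity) (by nlinarith)
    have hfactor : (s - μ) * (1 - s - μ) - s * (1 - s) * c ^ 2 =
        (μ - (1 - g) / 2) * (μ - (1 + g) / 2) := by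
      linear_combination hg2 / 4
    rw [det_groverMatrix_sub_smul_one, ← sub_eq_zero (a := μ), ← sub_eq_zero (a := μ),
      ← mul_eq_zero, ← hfactor]
    norm_cast
  have hind : |c| < 1 := abs_lt.2 ⟨by linarith, hc1⟩
  have hground := hasEigenvalue_groverHamiltonian hψ he hψe hind ((hroots _).2 (Or.inl rfl))
  refine ⟨(1 - g) / 2, hground, ?_, ?_, fun μ hμ => ?_⟩
  · refine finrank_eigenspace_groverHamiltonian hψ he hψe hc0.ne' hground ?_
    exact_mod_cast (by linarith : (1 - g) / 2 ≠ 1)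
  · refine hasEigenvalue_groverHamiltonian hψ he hψe hind ((hroots _).2 (Or.inr ?_))
    ring
  · by_cases hμ1 : μ = 1
    · exact Or.inr (by linarith)
    · have hdet := det_eq_zero_of_hasEigenvalue_groverHamiltonian hψ he hψe hμ
        (by exact_mod_cast hμ1)
      exact ((hroots μ).1 hdet).imp_right fun h => by linarith

end GroverHamiltonian

/-- **Spectral gap of the Grover interpolating Hamiltonian.**

On `ℂ^{2ⁿ}` let `H₀ = 1 − |0̂⟩⟨0̂|` (with `|0̂⟩` the normalized uniform superposition) and
`H₁ = 1 − |e_u⟩⟨e_u|` for a fixed basis element `u`, and `H(s) = (1−s)H₀ + sH₁`.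
Then for every `s ∈ [0,1]` the smallest eigenvalue `E₀` of `H(s)` is nondegenerate, and
the difference between the second-smallest and the smallest eigenvalue equals
`g(s) = √(2⁻ⁿ + 4(1 − 2⁻ⁿ)(s − 1/2)²)`; moreover `g(0) = g(1) = 1` and
`min_{s ∈ [0,1]} g(s) = 2^{−n/2}`. -/
theorem grover_hamiltonian_gap (n : ℕ) (hn : 1 ≤ n) (u : Fin (2 ^ n)) :
    let V := EuclideanSpace ℂ (Fin (2 ^ n))
    let ψ0 : V := ((Real.sqrt (2 ^ n) : ℂ))⁻¹ • ∑ w, EuclideanSpace.single w (1:ℂ)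
    let H0 : V →L[ℂ] V := 1 - (innerSL ℂ ψ0).smulRight ψ0
    let H1 : V →L[ℂ] V :=
      1 - (innerSL ℂ (EuclideanSpace.single u (1:ℂ))).smulRight (EuclideanSpace.single u (1:ℂ))
    let Hop : ℝ → V →L[ℂ] V := fun s => (1 - s) • H0 + s • H1
    let gfun : ℝ → ℝ := fun s =>
      Real.sqrt ((2:ℝ) ^ (-(n:ℝ)) + 4 * (1 - (2:ℝ) ^ (-(n:ℝ))) * (s - 1/2) ^ 2)
    (∀ s ∈ Set.Icc (0:ℝ) 1, ∃ E₀ : ℝ,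
      Module.End.HasEigenvalue ((Hop s).toLinearMap) (E₀ : ℂ) ∧
      Module.finrank ℂ (Module.End.eigenspace ((Hop s).toLinearMap) (E₀ : ℂ)) = 1 ∧
      Module.End.HasEigenvalue ((Hop s).toLinearMap) ((E₀ + gfun s : ℝ) : ℂ) ∧
      (∀ μ : ℝ, Module.End.HasEigenvalue ((Hop s).toLinearMap) ((μ : ℝ) : ℂ) →
        μ = E₀ ∨ E₀ + gfun s ≤ μ)) ∧
    gfun 0 = 1 ∧ gfun 1 = 1 ∧
    IsLeast (gfun '' Set.Icc (0:ℝ) 1) ((2:ℝ) ^ (-(n:ℝ) / 2)) := by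
  intro V ψ0 H0 H1 Hop gfun
  set c : ℝ := (√(2 ^ n))⁻¹ with hc
  have hc2 : c ^ 2 = 2 ^ (-(n : ℝ)) := by
    rw [hc, inv_pow, Real.sq_sqrt (by positivity), Real.rpow_neg zero_le_two, Real.rpow_natCast]
  have hc0 : 0 < c := by positivity
  have hc1 : c < 1 := inv_lt_one_of_one_lt₀ <| Real.lt_sqrt_of_sq_lt <| by
    rw [one_pow]; exact one_lt_pow₀ one_lt_two (by omega)
  have hψ : ‖ψ0‖ = 1 := by
    rw [norm_smul, EuclideanSpace.norm_sum_single_one, norm_inv, Complex.norm_real,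
      Real.norm_of_nonneg (Real.sqrt_nonneg _), Fintype.card_fin, Nat.cast_pow, Nat.cast_ofNat]
    exact inv_mul_cancel₀ (by positivity)
  have he : ‖EuclideanSpace.single u (1 : ℂ)‖ = 1 := by simp
  have hψe : ⟪ψ0, EuclideanSpace.single u (1 : ℂ)⟫_ℂ = c := by
    rw [inner_smul_left, EuclideanSpace.inner_sum_single_one_single]
    simp [c]
  refine ⟨fun s hs => ?_, groverGap_zero_right _, groverGap_one_right _, ?_⟩
  · have := groverHamiltonian_spectrum hψ he hψe hc0 hc1 hs
    rw [hc2] at this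
    exact this
  · have := isLeast_groverGap_image (p := 2 ^ (-(n : ℝ)))
      (Real.rpow_le_one_of_one_le_of_nonpos one_le_two (neg_nonpos.2 n.cast_nonneg))
    rwa [Real.sqrt_eq_rpow, ← Real.rpow_mul zero_le_two, neg_mul, one_div, ← div_eq_mul_inv,
      ← neg_div] at this
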